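/- The function t(u) = log((1 + cosh(sqrt(2)*u))/2) satisfies: the map F(u) = t(u)^{1/2}/u is strictly decreasing on (0,∞). -/

import Mathlib

noncomputable def tFun (u : ℝ) : ℝ := Real.log ((1 + Real.cosh (Real.sqrt 2 * u)) / 2)

open Real

noncomputable def phiAux (v : ℝ) : ℝ := v * (sinh v / cosh v) - 2 * log (cosh v)

lemma phiAux_hasDeriv (v : ℝ) :
    HasDerivAt phiAux ((v - sinh v * cosh v) / cosh v ^ 2) v := by
  have hc : cosh v ≠ 0 := (cosh_pos v).ne'
  have h1 : HasDerivAt (fun v : ℝ => sinh v / cosh v)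
      ((cosh v * cosh v - sinh v * sinh v) / cosh v ^ 2) v :=
    (Real.hasDerivAt_sinh v).div (Real.hasDerivAt_cosh v) hc
  have h2 : HasDerivAt (fun v : ℝ => v * (sinh v / cosh v))
      (1 * (sinh v / cosh v) + v * ((cosh v * cosh v - sinh v * sinh v) / cosh v ^ 2)) v :=
    (hasDerivAt_id v).mul h1
  have h3 : HasDerivAt (fun v : ℝ => log (cosh v)) (sinh v / cosh v) v :=
    (Real.hasDerivAt_cosh v).log hc
  have h4 : HasDerivAt phiAux _ v := h2.sub (h3.const_mul 2)
  convert h4 using 1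
  have hsq : cosh v * cosh v - sinh v * sinh v = 1 := by
    have := Real.cosh_sq_sub_sinh_sq v
    nlinarith [this]
  rw [hsq]
  field_simp
  ring

lemma phiAux_neg {v : ℝ} (hv : 0 < v) : phiAux v < 0 := by
  have hcont : Continuous phiAux := by
    have hc : ∀ x : ℝ, cosh x ≠ 0 := fun x => (cosh_pos x).ne'
    exact (continuous_id.mul (Real.continuous_sinh.div Real.continuous_cosh hc)).sub
      (continuous_const.mul (Real.continuous_cosh.log hc))
  have anti : StrictAntiOn phiAux (Set.Ici 0) := by
    apply strictAntiOn_of_deriv_neg (convex_Ici 0) hcont.continuousOn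
    intro x hx
    rw [interior_Ici] at hx
    rw [(phiAux_hasDeriv x).deriv]
    apply div_neg_of_neg_of_pos
    · have h1 : x < sinh x := Real.self_lt_sinh_iff.mpr hx
      have h2 : 1 ≤ cosh x := Real.one_le_cosh x
      have h3 : 0 < sinh x := Real.sinh_pos_iff.mpr hx
      nlinarith
    · positivity
  have h0 : phiAux 0 = 0 := by simp [phiAux]
  have := anti (Set.self_mem_Ici) (Set.mem_Ici.mpr hv.le) hv
  rwa [h0] at this

noncomputable def hAux (v : ℝ) : ℝ := log (cosh v) / v ^ 2

lemma hAux_hasDeriv {v : ℝ} (hv : v ≠ 0) :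
    HasDerivAt hAux ((sinh v / cosh v * v ^ 2 - log (cosh v) * (2 * v)) / (v ^ 2) ^ 2) v := by
  have h3 : HasDerivAt (fun v : ℝ => log (cosh v)) (sinh v / cosh v) v :=
    (Real.hasDerivAt_cosh v).log (cosh_pos v).ne'
  have h4 : HasDerivAt (fun v : ℝ => v ^ 2) (2 * v) v := by
    simpa using (hasDerivAt_pow 2 v)
  exact h3.div h4 (pow_ne_zero 2 hv)

lemma hAux_anti : StrictAntiOn hAux (Set.Ioi 0) := by
  apply strictAntiOn_of_deriv_neg (convex_Ioi 0)
  · apply ContinuousOn.div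
    · exact (Real.continuous_cosh.log (fun x => (cosh_pos x).ne')).continuousOn
    · exact (continuous_pow 2).continuousOn
    · intro x hx
      exact pow_ne_zero 2 (ne_of_gt hx)
  · intro x hx
    rw [interior_Ioi, Set.mem_Ioi] at hx
    rw [(hAux_hasDeriv hx.ne').deriv]
    apply div_neg_of_neg_of_pos
    · have hnum : sinh x / cosh x * x ^ 2 - log (cosh x) * (2 * x) = x * phiAux x := by
        unfold phiAux; ring
      rw [hnum]
      exact mul_neg_of_pos_of_neg hx (phiAux_neg hx)
    · exact pow_pos (pow_pos hx 2) 2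

lemma tFun_eq (u : ℝ) : tFun u = 2 * log (cosh (u / Real.sqrt 2)) := by
  have hs : Real.sqrt 2 * Real.sqrt 2 = 2 := Real.mul_self_sqrt (by norm_num)
  have hne : Real.sqrt 2 ≠ 0 := by positivity
  have harg : Real.sqrt 2 * u = 2 * (u / Real.sqrt 2) := by
    field_simp
    linear_combination u * hs
  have hcosh : (1 + Real.cosh (Real.sqrt 2 * u)) / 2 = cosh (u / Real.sqrt 2) ^ 2 := by
    rw [harg, Real.cosh_two_mul]
    linear_combination (-(1/2 : ℝ)) * Real.cosh_sq_sub_sinh_sq (u / Real.sqrt 2)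
  rw [tFun, hcosh, Real.log_pow]
  norm_num

lemma sqrt_tFun_eq {u : ℝ} (hu : 0 < u) :
    Real.sqrt (tFun u) / u = Real.sqrt (hAux (u / Real.sqrt 2)) := by
  set v := u / Real.sqrt 2 with hv
  have hs2 : (0:ℝ) < Real.sqrt 2 := by positivity
  have hvpos : 0 < v := div_pos hu hs2
  have hL : 0 ≤ log (cosh v) := Real.log_nonneg (Real.one_le_cosh v)
  have hu' : u = Real.sqrt 2 * v := by
    rw [hv]; field_simp
  rw [tFun_eq, hAux]
  rw [Real.sqrt_div hL, Real.sqrt_sq hvpos.le]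
  rw [show (2:ℝ) * log (cosh v) = 2 * log (cosh v) from rfl]
  rw [Real.sqrt_mul (by norm_num : (0:ℝ) ≤ 2)]
  rw [hu', mul_div_mul_left _ _ (ne_of_gt hs2)]

theorem sqrt_tFun_div_strictAnti :
    StrictAntiOn (fun u : ℝ => Real.sqrt (tFun u) / u) (Set.Ioi (0 : ℝ)) := by
  intro a ha b hb hab
  simp only [Set.mem_Ioi] at ha hb
  show Real.sqrt (tFun b) / b < Real.sqrt (tFun a) / a
  rw [sqrt_tFun_eq ha, sqrt_tFun_eq hb]
  have hs2 : (0:ℝ) < Real.sqrt 2 := by positivity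
  have hva : 0 < a / Real.sqrt 2 := div_pos ha hs2
  have hvb : 0 < b / Real.sqrt 2 := div_pos hb hs2
  have hvab : a / Real.sqrt 2 < b / Real.sqrt 2 := by gcongr
  have hanti := hAux_anti (Set.mem_Ioi.mpr hva) (Set.mem_Ioi.mpr hvb) hvab
  have hnn : 0 ≤ hAux (b / Real.sqrt 2) := by
    unfold hAux
    apply div_nonneg (Real.log_nonneg (Real.one_le_cosh _)) (by positivity)
  exact Real.sqrt_lt_sqrt hnn hanti
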